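/- arXiv:math/9812063 — 5 statements merged into one kernel-verified Lean document; each statement's English description precedes it below -/
import Mathlib

section
/- Let V be a type and r : V → V → Prop a relation, with beh(y|x) ∈ ℕ∞ defined as the supremum of all n ≥ 1 for which there is a connecting sequence x = y₀, y₁, …, yₙ = y with r yᵢ₊₁ yᵢ for all 0 ≤ i < n (beh(y|x) = 0 if none exists). Suppose a, b, c ∈ V satisfy 1 ≤ beh(a|b) < ∞ and beh(a|c) ≥ 1. Then beh(c|b) < beh(a|b). -/
/-- A connecting sequence from `y` to `x` of length `n`:
a sequence `x = f 0, f 1, …, f n = y` with `r (f (i+1)) (f i)` for all `0 ≤ i < n`. -/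
def ConnSeq {V : Type*} (r : V → V → Prop) (x y : V) (n : ℕ) : Prop :=
  ∃ f : ℕ → V, f 0 = x ∧ f n = y ∧ ∀ i < n, r (f (i + 1)) (f i)

/-- `beh r y x` is the supremum in `ℕ∞` of the lengths `n ≥ 1` of connecting
sequences from `y` to `x`, equal to `0` when none exists. -/
noncomputable def beh {V : Type*} (r : V → V → Prop) (y x : V) : ℕ∞ :=
  sSup {m : ℕ∞ | ∃ n : ℕ, 1 ≤ n ∧ ConnSeq r x y n ∧ m = (n : ℕ∞)}

lemma ConnSeq.trans {V : Type*} {r : V → V → Prop} {x y z : V} {n m : ℕ}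
    (h1 : ConnSeq r x y n) (h2 : ConnSeq r y z m) : ConnSeq r x z (n + m) := by
  obtain ⟨f, hf0, hfn, hf⟩ := h1
  obtain ⟨g, hg0, hgm, hg⟩ := h2
  refine ⟨fun i => if i < n then f i else g (i - n), ?_, ?_, ?_⟩
  all_goals beta_reduce
  · by_cases h : 0 < n
    · simp [h, hf0]
    · have hn0 : n = 0 := by omega
      rw [if_neg (by omega), show (0:ℕ) - n = 0 by omega, hg0, ← hfn, hn0, hf0]
  · rw [if_neg (by omega), Nat.add_sub_cancel_left, hgm]
  · intro i hi
    by_cases h1 : i + 1 < n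
    · rw [if_pos h1, if_pos (by omega)]
      exact hf i (by omega)
    · by_cases h2 : i < n
      · have hn : i + 1 = n := by omega
        rw [if_neg h1, if_pos h2, hn, Nat.sub_self, hg0, ← hfn, ← hn]
        exact hf i h2
      · rw [if_neg h1, if_neg h2, show i + 1 - n = i - n + 1 by omega]
        exact hg (i - n) (by omega)

theorem beh_lt_of_boundary {V : Type*} (r : V → V → Prop) (a b c : V)
    (hab₁ : 1 ≤ beh r a b) (hab₂ : beh r a b < ⊤) (hac : 1 ≤ beh r a c) :
    beh r c b < beh r a b := by
  -- extract a connecting sequence from c to a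
  have hSac : {m : ℕ∞ | ∃ n : ℕ, 1 ≤ n ∧ ConnSeq r c a n ∧ m = (n : ℕ∞)}.Nonempty := by
    by_contra h
    rw [Set.not_nonempty_iff_eq_empty] at h
    rw [beh, h, sSup_empty] at hac
    exact absurd hac (by simp)
  obtain ⟨-, m, hm1, hcm, rfl⟩ := hSac
  lift beh r a b to ℕ using hab₂.ne with N hN
  have hN1 : 1 ≤ N := by exact_mod_cast hab₁
  have hle : beh r c b ≤ ((N - 1 : ℕ) : ℕ∞) := by
    apply sSup_le
    rintro - ⟨n, hn1, hbn, rfl⟩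
    have hmem : ((n + m : ℕ) : ℕ∞) ∈
        {m : ℕ∞ | ∃ k : ℕ, 1 ≤ k ∧ ConnSeq r b a k ∧ m = (k : ℕ∞)} :=
      ⟨n + m, by omega, hbn.trans hcm, rfl⟩
    have := le_sSup hmem
    rw [show sSup {m : ℕ∞ | ∃ k : ℕ, 1 ≤ k ∧ ConnSeq r b a k ∧ m = (k : ℕ∞)} = beh r a b
      from rfl, ← hN] at this
    have hnm : n + m ≤ N := by exact_mod_cast this
    exact_mod_cast (by omega : n ≤ N - 1)
  refine hle.trans_lt ?_
  exact_mod_cast (by omega : N - 1 < N)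
end

section
/- Let X be a type and N : X → Set X a family of subsets satisfying: (self-membership) x ∈ N x for every x ∈ X; (nesting) if N a ∩ N b ≠ ∅ then N a ⊆ N b or N b ⊆ N a; (antisymmetry) if a ∈ N b and b ∈ N a then a = b; and (finiteness) for every x the set D x = {δ | δ ≠ x ∧ x ∈ N δ} is finite. Define loctype x = card(D x) + 1. Then for all x, δ with x ∈ N δ and δ ≠ x, one has loctype δ < loctype x. -/
theorem loctype_lt_of_mem {X : Type*} (N : X → Set X)
    (hself : ∀ x, x ∈ N x)
    (hnest : ∀ a b, (N a ∩ N b).Nonempty → N a ⊆ N b ∨ N b ⊆ N a)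
    (hanti : ∀ a b, a ∈ N b → b ∈ N a → a = b)
    (hfin : ∀ x, {δ | δ ≠ x ∧ x ∈ N δ}.Finite)
    (loctype : X → ℕ)
    (hloc : ∀ x, loctype x = {δ | δ ≠ x ∧ x ∈ N δ}.ncard + 1) :
    ∀ x δ, x ∈ N δ → δ ≠ x → loctype δ < loctype x := by
  intro x δ hxδ hδx
  rw [hloc, hloc]
  have hsub : {γ | γ ≠ δ ∧ δ ∈ N γ} ⊆ {γ | γ ≠ x ∧ x ∈ N γ} := by
    intro γ ⟨hγδ, hδγ⟩
    have hne : (N δ ∩ N γ).Nonempty := ⟨δ, hself δ, hδγ⟩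
    have hxγ : x ∈ N γ := by
      rcases hnest δ γ hne with h | h
      · exact h hxδ
      · exact absurd (hanti γ δ (h (hself γ)) hδγ) hγδ
    exact ⟨fun h => hδx (hanti x δ hxδ (h ▸ hδγ)).symm, hxγ⟩
  have hss : {γ | γ ≠ δ ∧ δ ∈ N γ} ⊂ {γ | γ ≠ x ∧ x ∈ N γ} := by
    refine ⟨hsub, fun h => ?_⟩
    exact absurd (h ⟨hδx, hxδ⟩).1 (by simp)
  have := Set.ncard_lt_ncard hss (hfin x)
  omega
end

section
/- Let X be a type and N : X → Set X a family of subsets satisfying: (self-membership) x ∈ N x for every x ∈ X; (membership-nesting) if N a ∩ N b ≠ ∅ then a ∈ N b or b ∈ N a. For x₀ ∈ X define the wide neighborhood wide(x₀) as the set of all γ for which there exists a finite sequence x₀ = γ₀, γ₁, …, γₙ = γ with γᵢ ∈ N(γᵢ₋₁) for all 1 ≤ i ≤ n. Then for all a, b ∈ X, if wide(a) ∩ wide(b) ≠ ∅, then a ∈ wide(b) or b ∈ wide(a). -/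
/-- The wide neighborhood of `x₀`: all points reachable from `x₀` by a finite chain
`x₀ = f 0, f 1, …, f n = γ` with `f i ∈ N (f (i-1))` for all `1 ≤ i ≤ n`. -/
def wide {X : Type*} (N : X → Set X) (x₀ : X) : Set X :=
  {γ | ∃ (n : ℕ) (f : ℕ → X), f 0 = x₀ ∧ f n = γ ∧
    ∀ i, 1 ≤ i → i ≤ n → f i ∈ N (f (i - 1))}

/-- Reachability in exactly `n` steps. -/
def reach {X : Type*} (N : X → Set X) (n : ℕ) (a c : X) : Prop :=
  ∃ f : ℕ → X, f 0 = a ∧ f n = c ∧ ∀ i, 1 ≤ i → i ≤ n → f i ∈ N (f (i - 1))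

lemma mem_wide_iff {X : Type*} (N : X → Set X) (a c : X) :
    c ∈ wide N a ↔ ∃ n, reach N n a c := Iff.rfl

lemma reach_zero {X : Type*} {N : X → Set X} {a c : X} (h : reach N 0 a c) : a = c := by
  obtain ⟨f, h0, hn, _⟩ := h; rw [← h0, ← hn]

lemma reach_self {X : Type*} (N : X → Set X) (a : X) : reach N 0 a a :=
  ⟨fun _ => a, rfl, rfl, fun i h1 h0 => absurd (h1.trans h0) (by omega)⟩

lemma reach_succ {X : Type*} {N : X → Set X} {n : ℕ} {a c : X} (h : reach N (n + 1) a c) :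
    ∃ a', reach N n a a' ∧ c ∈ N a' := by
  obtain ⟨f, h0, hn, hstep⟩ := h
  refine ⟨f n, ⟨f, h0, rfl, fun i h1 hle => hstep i h1 (by omega)⟩, ?_⟩
  have := hstep (n + 1) (by omega) le_rfl
  simpa [hn] using this

lemma reach_extend {X : Type*} {N : X → Set X} {n : ℕ} {a a' c : X}
    (h : reach N n a a') (hc : c ∈ N a') : reach N (n + 1) a c := by
  obtain ⟨f, h0, hn, hstep⟩ := h
  refine ⟨fun i => if i ≤ n then f i else c, by simp [h0], by simp, ?_⟩
  intro i h1 hle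
  by_cases hi : i ≤ n
  · have : i - 1 ≤ n := by omega
    simpa [hi, this] using hstep i h1 hi
  · have hi' : i = n + 1 := by omega
    subst hi'
    simpa [hn] using hc

lemma reach_key {X : Type*} (N : X → Set X)
    (hself : ∀ x, x ∈ N x)
    (hnest : ∀ a b, (N a ∩ N b).Nonempty → a ∈ N b ∨ b ∈ N a) :
    ∀ k n m (a b c : X), n + m = k → reach N n a c → reach N m b c →
      a ∈ wide N b ∨ b ∈ wide N a := by
  intro k
  induction k using Nat.strong_induction_on with
  | _ k IH =>
    intro n m a b c hk ha hb
    match n, m with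
    | 0, m =>
      left
      obtain rfl := reach_zero ha
      exact ⟨m, hb⟩
    | n, 0 =>
      right
      obtain rfl := reach_zero hb
      exact ⟨n, ha⟩
    | n + 1, m + 1 =>
      obtain ⟨a', ha', hca⟩ := reach_succ ha
      obtain ⟨b', hb', hcb⟩ := reach_succ hb
      rcases hnest a' b' ⟨c, hca, hcb⟩ with h | h
      · exact IH (n + (m + 1)) (by omega) n (m + 1) a b a' rfl ha' (reach_extend hb' h)
      · exact IH ((n + 1) + m) (by omega) (n + 1) m a b b' rfl (reach_extend ha' h) hb'

theorem wide_mem_of_inter_nonempty {X : Type*} (N : X → Set X)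
    (hself : ∀ x, x ∈ N x)
    (hnest : ∀ a b, (N a ∩ N b).Nonempty → a ∈ N b ∨ b ∈ N a) :
    ∀ a b : X, (wide N a ∩ wide N b).Nonempty →
      a ∈ wide N b ∨ b ∈ wide N a := by
  intro a b ⟨c, hca, hcb⟩
  obtain ⟨n, hn⟩ := hca
  obtain ⟨m, hm⟩ := hcb
  exact reach_key N hself hnest (n + m) n m a b c rfl hn hm
end

section
/- Let X be a type and N : X → Set X a family of subsets satisfying: (self-membership) x ∈ N x for every x ∈ X; (membership-nesting) if N a ∩ N b ≠ ∅ then a ∈ N b or b ∈ N a. For x₀ ∈ X define the wide neighborhood wide(x₀) as the set of all γ for which there exists a finite sequence x₀ = γ₀, γ₁, …, γₙ = γ with γᵢ ∈ N(γᵢ₋₁) for all 1 ≤ i ≤ n. Suppose γ₀, γ₀* ∈ X are distinct and each belongs to no N y for y other than itself (i.e., γ₀ ∈ N y → y = γ₀, and γ₀* ∈ N y → y = γ₀*). Then wide(γ₀) ∩ wide(γ₀*) = ∅. -/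
theorem wide_disjoint {X : Type*} (N : X → Set X)
    (hself : ∀ x, x ∈ N x)
    (hnest : ∀ a b, (N a ∩ N b).Nonempty → a ∈ N b ∨ b ∈ N a)
    (γ₀ γ₀' : X) (hne : γ₀ ≠ γ₀')
    (h₀ : ∀ y, γ₀ ∈ N y → y = γ₀)
    (h₀' : ∀ y, γ₀' ∈ N y → y = γ₀') :
    wide N γ₀ ∩ wide N γ₀' = ∅ := by
  ext γ
  simp only [Set.mem_inter_iff, Set.mem_empty_iff_false, iff_false, not_and]
  rintro ⟨n, f, hf0, hfn, hf⟩ ⟨m, g, hg0, hgm, hg⟩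
  suffices H : ∀ k n m (f g : ℕ → X), n + m ≤ k → f 0 = γ₀ → g 0 = γ₀' →
      (∀ i, 1 ≤ i → i ≤ n → f i ∈ N (f (i - 1))) →
      (∀ i, 1 ≤ i → i ≤ m → g i ∈ N (g (i - 1))) →
      f n = g m → False from
    H (n + m) n m f g le_rfl hf0 hg0 hf hg (hfn.trans hgm.symm)
  clear hf0 hfn hf hg0 hgm hg f g n m
  intro k
  induction k with
  | zero =>
    intro n m f g hk hf0 hg0 hf hg heq
    have hn : n = 0 := by omega
    have hm : m = 0 := by omega
    subst hn hm
    exact hne (hf0 ▸ hg0 ▸ heq)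
  | succ k ih =>
    intro n m f g hk hf0 hg0 hf hg heq
    match n, m with
    | 0, 0 => exact hne (hf0 ▸ hg0 ▸ heq)
    | 0, (m' + 1) =>
      have h1 : γ₀ ∈ N (g m') := by
        have := hg (m' + 1) (by omega) le_rfl
        simpa [← heq, hf0] using this
      have h2 : g m' = γ₀ := h₀ _ h1
      exact ih 0 m' f g (by omega) hf0 hg0 (fun i h1 h2 => by omega) 
        (fun i hi1 hi2 => hg i hi1 (by omega)) (by rw [hf0, h2])
    | (n' + 1), 0 =>
      have h1 : γ₀' ∈ N (f n') := by
        have := hf (n' + 1) (by omega) le_rfl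
        simpa [heq, hg0] using this
      have h2 : f n' = γ₀' := h₀' _ h1
      exact ih n' 0 f g (by omega) hf0 hg0
        (fun i hi1 hi2 => hf i hi1 (by omega)) (fun i h1 h2 => by omega)
        (by rw [hg0, h2])
    | (n' + 1), (m' + 1) =>
      have h1 : f (n' + 1) ∈ N (f n') := by
        simpa using hf (n' + 1) (by omega) le_rfl
      have h2 : g (m' + 1) ∈ N (g m') := by
        simpa using hg (m' + 1) (by omega) le_rfl
      have hnon : (N (f n') ∩ N (g m')).Nonempty :=
        ⟨f (n' + 1), h1, heq ▸ h2⟩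
      rcases hnest _ _ hnon with hc | hc
      · -- f n' ∈ N (g m'); reroute g to end at f n'
        set g' : ℕ → X := fun i => if i ≤ m' then g i else f n' with hg'
        refine ih n' (m' + 1) f g' (by omega) hf0 (by simp [hg', hg0])
          (fun i hi1 hi2 => hf i hi1 (by omega)) ?_ (by simp [hg'])
        intro i hi1 hi2
        by_cases hle : i ≤ m'
        · have : i - 1 ≤ m' := by omega
          simpa [hg', hle, this] using hg i hi1 (by omega)
        · have hi : i = m' + 1 := by omega
          subst hi
          simpa [hg'] using hc
      · -- g m' ∈ N (f n'); reroute f to end at g m'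
        set f' : ℕ → X := fun i => if i ≤ n' then f i else g m' with hf'
        refine ih (n' + 1) m' f' g (by omega) (by simp [hf', hf0]) hg0 ?_
          (fun i hi1 hi2 => hg i hi1 (by omega)) (by simp [hf'])
        intro i hi1 hi2
        by_cases hle : i ≤ n'
        · have : i - 1 ≤ n' := by omega
          simpa [hf', hle, this] using hf i hi1 (by omega)
        · have hi : i = n' + 1 := by omega
          subst hi
          simpa [hf'] using hc
end

section
/- Let H be a type, B ∈ ℕ, and b : H → ℕ a function with 1 ≤ b h ≤ B for all h ∈ H. Let T : Finset H → Set H be monotone (Z ⊆ Z' implies T Z ⊆ T Z'). Assume that for every k ≥ 1 and every finite Z ⊆ H such that every h with b h < k satisfies h ∈ T Z ∪ ↑Z, the set {h | b h = k ∧ h ∉ T Z ∪ ↑Z} is finite. Then there exists a finite Z ⊆ H such that every h ∈ H satisfies h ∈ T Z ∪ ↑Z. -/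
theorem finite_cover_of_tubular {H : Type*} (B : ℕ) (b : H → ℕ)
    (hb : ∀ h, 1 ≤ b h ∧ b h ≤ B)
    (T : Finset H → Set H)
    (hmono : ∀ Z Z' : Finset H, Z ⊆ Z' → T Z ⊆ T Z')
    (hstep : ∀ k : ℕ, 1 ≤ k → ∀ Z : Finset H,
      (∀ h, b h < k → h ∈ T Z ∪ ↑Z) →
      {h | b h = k ∧ h ∉ T Z ∪ ↑Z}.Finite) :
    ∃ Z : Finset H, ∀ h, h ∈ T Z ∪ ↑Z := by
  classical
  have key : ∀ k : ℕ, ∃ Z : Finset H, ∀ h, b h ≤ k → h ∈ T Z ∪ ↑Z := by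
    intro k
    induction k with
    | zero =>
      exact ⟨∅, fun h hh => absurd (le_trans (hb h).1 hh) (by norm_num)⟩
    | succ k ih =>
      obtain ⟨Z, hZ⟩ := ih
      have hcov : ∀ h, b h < k + 1 → h ∈ T Z ∪ ↑Z := fun h hh =>
        hZ h (Nat.lt_succ_iff.mp hh)
      have hfin := hstep (k + 1) (Nat.succ_le_succ (Nat.zero_le k)) Z hcov
      refine ⟨Z ∪ hfin.toFinset, fun h hh => ?_⟩
      have hsub : Z ⊆ Z ∪ hfin.toFinset := Finset.subset_union_left
      rcases lt_or_eq_of_le hh with hlt | heq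
      · rcases hZ h (Nat.lt_succ_iff.mp hlt) with h1 | h2
        · exact Or.inl (hmono _ _ hsub h1)
        · exact Or.inr (Finset.mem_coe.mpr (hsub h2))
      · by_cases hm : h ∈ T Z ∪ ↑Z
        · rcases hm with h1 | h2
          · exact Or.inl (hmono _ _ hsub h1)
          · exact Or.inr (Finset.mem_coe.mpr (hsub h2))
        · refine Or.inr (Finset.mem_coe.mpr (Finset.mem_union_right _ ?_))
          exact hfin.mem_toFinset.mpr ⟨heq, hm⟩
  obtain ⟨Z, hZ⟩ := key B
  exact ⟨Z, fun h => hZ h (hb h).2⟩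
end
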